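/- arXiv:2602.12262 — 6 statements merged into one kernel-verified Lean document; each statement's English description precedes it below -/
import Mathlib

section
/- Let X be a finite type, let p be a pmf on X, and let Q be a log-convex set of everywhere-positive pmfs on X. Suppose q* ∈ Q minimizes q ↦ KL(p ‖ q) over Q. Then for every r ∈ Q, KL(p ‖ r) ≥ KL(p ‖ q*) + KL(q* ‖ r). -/
open Finset

/-- A probability mass function on a finite type. -/
def IsPmf {X : Type*} [Fintype X] (p : X → ℝ) : Prop :=
  (∀ x, 0 ≤ p x) ∧ ∑ x, p x = 1

/-- Kullback–Leibler divergence between pmfs on a finite type. -/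
noncomputable def KL {X : Type*} [Fintype X] (p q : X → ℝ) : ℝ :=
  ∑ x, if 0 < p x then p x * Real.log (p x / q x) else 0

/-- A set of pmfs is log-convex if it is closed under normalized geometric mixtures. -/
def LogConvexSet {X : Type*} [Fintype X] (Q : Set (X → ℝ)) : Prop :=
  ∀ q₀ ∈ Q, ∀ q₁ ∈ Q, ∀ lam : ℝ, 0 ≤ lam → lam ≤ 1 →
    (fun x => q₀ x ^ (1 - lam) * q₁ x ^ lam /
      ∑ x', q₀ x' ^ (1 - lam) * q₁ x' ^ lam) ∈ Q

/-- Pythagorean inequality for the KL divergence: if `q*` is the reverse I-projection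
of `p` onto a log-convex set `Q` of everywhere-positive pmfs, then for every `r ∈ Q`,
`KL(p‖r) ≥ KL(p‖q*) + KL(q*‖r)`. -/
theorem kl_pythagorean {X : Type*} [Fintype X]
    (p : X → ℝ) (hp : IsPmf p)
    (Q : Set (X → ℝ))
    (hQ : ∀ q ∈ Q, IsPmf q ∧ ∀ x, 0 < q x)
    (hlc : LogConvexSet Q)
    (qstar : X → ℝ) (hqstar : qstar ∈ Q)
    (hmin : ∀ q ∈ Q, KL p qstar ≤ KL p q) :
    ∀ r ∈ Q, KL p qstar + KL qstar r ≤ KL p r := by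
  intro r hr
  obtain ⟨hqs_pmf, hqs_pos⟩ := hQ qstar hqstar
  obtain ⟨hr_pmf, hr_pos⟩ := hQ r hr
  set c : X → ℝ := fun x => Real.log (r x) - Real.log (qstar x) with hc
  set Z : ℝ → ℝ := fun lam => ∑ x, qstar x * Real.exp (lam * c x) with hZ
  set S : ℝ := ∑ x, p x * c x with hS
  set D : ℝ := ∑ x, qstar x * c x with hD
  -- the geometric mixture equals the exponential family form
  have hmix : ∀ lam : ℝ, ∀ x, qstar x ^ (1 - lam) * r x ^ lam
      = qstar x * Real.exp (lam * c x) := by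
    intro lam x
    have h2 : qstar x * Real.exp (lam * c x)
        = Real.exp (Real.log (qstar x) + lam * c x) := by
      rw [Real.exp_add, Real.exp_log (hqs_pos x)]
    rw [h2, Real.rpow_def_of_pos (hqs_pos x), Real.rpow_def_of_pos (hr_pos x),
      ← Real.exp_add]
    congr 1
    simp only [hc]
    ring
  have hZpos : ∀ lam, 0 < Z lam := by
    intro lam
    have hne : Nonempty X := by
      by_contra h
      simp only [not_nonempty_iff] at h
      have h2 := hp.2
      rw [Finset.univ_eq_empty, Finset.sum_empty] at h2
      norm_num at h2
    apply Finset.sum_pos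
    · intro x _
      exact mul_pos (hqs_pos x) (Real.exp_pos _)
    · exact Finset.univ_nonempty
  have hZ0 : Z 0 = 1 := by
    simp only [hZ, zero_mul, Real.exp_zero, mul_one]
    exact hqs_pmf.2
  -- membership of the path in Q
  have hpath : ∀ lam : ℝ, 0 ≤ lam → lam ≤ 1 →
      (fun x => qstar x * Real.exp (lam * c x) / Z lam) ∈ Q := by
    intro lam h0 h1
    have hQmem := hlc qstar hqstar r hr lam h0 h1
    have hfun : (fun x => qstar x ^ (1 - lam) * r x ^ lam /
        ∑ x', qstar x' ^ (1 - lam) * r x' ^ lam)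
        = (fun x => qstar x * Real.exp (lam * c x) / Z lam) := by
      funext x
      rw [hmix]
      congr 1
      simp only [hZ]
      exact Finset.sum_congr rfl fun x' _ => hmix lam x'
    rwa [hfun] at hQmem
  -- KL along the path
  have hKLpath : ∀ lam : ℝ,
      KL p (fun x => qstar x * Real.exp (lam * c x) / Z lam)
        = KL p qstar - lam * S + Real.log (Z lam) := by
    intro lam
    have key : ∀ x, (if 0 < p x then
        p x * Real.log (p x / (qstar x * Real.exp (lam * c x) / Z lam)) else 0)
        = (if 0 < p x then p x * Real.log (p x / qstar x) else 0)
          - lam * (p x * c x) + p x * Real.log (Z lam) := by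
      intro x
      by_cases hpx : 0 < p x
      · have hq := hqs_pos x
        have hZl := hZpos lam
        have e1 : Real.log (p x / (qstar x * Real.exp (lam * c x) / Z lam))
            = Real.log (p x / qstar x) - lam * c x + Real.log (Z lam) := by
          rw [div_div_eq_mul_div,
            Real.log_div (ne_of_gt (mul_pos hpx hZl))
              (ne_of_gt (mul_pos hq (Real.exp_pos _))),
            Real.log_mul hpx.ne' hZl.ne',
            Real.log_mul hq.ne' (Real.exp_ne_zero _), Real.log_exp,
            Real.log_div hpx.ne' hq.ne']
          ring
        simp only [hpx, if_true, e1]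
        ring
      · have hpx0 : p x = 0 := le_antisymm (not_lt.mp hpx) (hp.1 x)
        simp [hpx, hpx0]
    simp only [KL]
    rw [Finset.sum_congr rfl (fun x _ => key x),
      Finset.sum_add_distrib, Finset.sum_sub_distrib, ← Finset.mul_sum,
      ← Finset.sum_mul, hp.2, one_mul, ← hS]
  -- minimality gives S ≤ log (Z lam) / lam for lam in (0,1]
  have hslope : ∀ lam : ℝ, 0 < lam → lam ≤ 1 → S ≤ Real.log (Z lam) / lam := by
    intro lam h0 h1
    have h := hmin _ (hpath lam h0.le h1)
    rw [hKLpath lam] at h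
    rw [le_div_iff₀ h0]
    linarith
  -- derivative of Z at 0
  have hZderiv : HasDerivAt Z D 0 := by
    have hterm : ∀ x ∈ Finset.univ (α := X), HasDerivAt
        (fun lam : ℝ => qstar x * Real.exp (lam * c x)) (qstar x * c x) 0 := by
      intro x _
      have h1 : HasDerivAt (fun lam : ℝ => lam * c x) (c x) 0 :=
        hasDerivAt_mul_const (c x)
      have h2 := h1.exp
      simp only [zero_mul, Real.exp_zero, one_mul] at h2
      have h3 := h2.const_mul (qstar x)
      exact h3
    have := HasDerivAt.fun_sum hterm
    simpa [hD] using this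
  -- derivative of log ∘ Z at 0
  have hlogZ : HasDerivAt (fun lam => Real.log (Z lam)) D 0 := by
    have := hZderiv.log (by rw [hZ0]; norm_num)
    simpa [hZ0] using this
  -- S ≤ D via limit of slopes
  have hSD : S ≤ D := by
    have htend := hasDerivAt_iff_tendsto_slope.mp hlogZ
    have htend' : Filter.Tendsto (slope (fun lam => Real.log (Z lam)) 0)
        (nhdsWithin 0 (Set.Ioi 0)) (nhds D) :=
      htend.mono_left (nhdsWithin_mono 0 (fun x hx => ne_of_gt hx))
    refine ge_of_tendsto htend' ?_
    filter_upwards [Ioo_mem_nhdsGT_of_mem (by norm_num : (0:ℝ) ∈ Set.Ico 0 1)]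
      with lam hlam
    have h0 : 0 < lam := hlam.1
    have hle := hslope lam h0 hlam.2.le
    rw [slope_def_field]
    simp only [hZ0, Real.log_one, sub_zero]
    exact hle
  -- relate KL p r and KL qstar r to S and D
  have hKLr : KL p r = KL p qstar - S := by
    simp only [KL, hS]
    rw [eq_sub_iff_add_eq, ← Finset.sum_add_distrib]
    apply Finset.sum_congr rfl
    intro x _
    by_cases hpx : 0 < p x
    · simp only [hpx, if_true, hc]
      rw [Real.log_div (ne_of_gt hpx) (ne_of_gt (hr_pos x)),
        Real.log_div (ne_of_gt hpx) (ne_of_gt (hqs_pos x))]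
      ring
    · have hpx0 : p x = 0 := le_antisymm (not_lt.mp hpx) (hp.1 x)
      simp [hpx, hpx0]
  have hKLqr : KL qstar r = -D := by
    simp only [KL, hD, ← Finset.sum_neg_distrib]
    apply Finset.sum_congr rfl
    intro x _
    simp only [hqs_pos x, if_true, hc]
    rw [Real.log_div (ne_of_gt (hqs_pos x)) (ne_of_gt (hr_pos x))]
    ring
  rw [hKLr, hKLqr]
  linarith
end

section
/- Let Y and X be finite types, let m and μ be pmfs on Y with μ(y) > 0 whenever m(y) > 0, and for each y with m(y) > 0 let P(·∣y) be a pmf on X. Let 𝒮 be a nonempty set of conditional kernels, each S ∈ 𝒮 assigning to every y with m(y) > 0 a pmf S(·∣y) on X with P(x∣y) > 0 whenever S(x∣y) > 0. Define the on-policy reverse-KL risk R(S) = ∑_{y : m(y)>0} m(y) · KL(S(·∣y) ‖ P(·∣y)). Suppose S*_Tra ∈ 𝒮 minimizes S ↦ KL(J_S ‖ J_P) over 𝒮, where J_S(y,x) = m(y)·S(x∣y) and J_P(y,x) = m(y)·P(x∣y), and suppose S* ∈ 𝒮 minimizes S ↦ KL(J_S ‖ J') over 𝒮, where J'(y,x)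 = μ(y)·P(x∣y). Then R(S*_Tra) ≤ R(S*). -/
open Finset

lemma KL_joint_eq {Y X : Type*} [Fintype Y] [Fintype X]
    (m : Y → ℝ) (hm : ∀ y, 0 ≤ m y) (P S : Y → X → ℝ)
    (hS : ∀ y, 0 < m y → ∀ x, 0 ≤ S y x) :
    KL (fun z : Y × X => m z.1 * S z.1 z.2) (fun z : Y × X => m z.1 * P z.1 z.2)
      = ∑ y, if 0 < m y then m y * KL (S y) (P y) else 0 := by
  unfold KL
  rw [Fintype.sum_prod_type]
  refine Finset.sum_congr rfl fun y _ => ?_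
  by_cases hy : 0 < m y
  · simp only [hy, if_true]
    rw [Finset.mul_sum]
    refine Finset.sum_congr rfl fun x _ => ?_
    by_cases hx : 0 < S y x
    · have hpos : 0 < m y * S y x := mul_pos hy hx
      rw [if_pos hpos, if_pos hx, mul_div_mul_left _ _ (ne_of_gt hy)]
      ring
    · have : ¬ 0 < m y * S y x := by
        intro h
        exact hx (lt_of_le_of_ne (hS y hy x) (by
          intro h0
          rw [← h0, mul_zero] at h
          exact lt_irrefl 0 h))
      rw [if_neg this, if_neg hx, mul_zero]
  · have hy0 : m y = 0 := le_antisymm (not_lt.mp hy) (hm y)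
    simp [hy, hy0]

/-- Reverse-KL optimality of trajectory self-distillation: a minimizer `S*_Tra` of
`S ↦ KL(J_S ‖ J_P)` (shared marginal `m`) achieves on-policy reverse-KL risk no
larger than a minimizer `S*` of `S ↦ KL(J_S ‖ J')` with alternative marginal `μ`. -/
theorem trajectory_distillation_optimal_reverse {Y X : Type*} [Fintype Y] [Fintype X]
    (m μ : Y → ℝ) (hm : IsPmf m) (hμ : IsPmf μ)
    (habsY : ∀ y, 0 < m y → 0 < μ y)
    (P : Y → X → ℝ) (hP : ∀ y, 0 < m y → IsPmf (P y))
    (𝒮 : Set (Y → X → ℝ)) (hne : 𝒮.Nonempty)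
    (h𝒮 : ∀ S ∈ 𝒮, ∀ y, 0 < m y →
      IsPmf (S y) ∧ ∀ x, 0 < S y x → 0 < P y x)
    (R : (Y → X → ℝ) → ℝ)
    (hR : ∀ S, R S = ∑ y, if 0 < m y then m y * KL (S y) (P y) else 0)
    (SstarTra : Y → X → ℝ) (hSstarTra : SstarTra ∈ 𝒮)
    (hminTra : ∀ S ∈ 𝒮,
      KL (fun z : Y × X => m z.1 * SstarTra z.1 z.2) (fun z : Y × X => m z.1 * P z.1 z.2)
        ≤ KL (fun z : Y × X => m z.1 * S z.1 z.2) (fun z : Y × X => m z.1 * P z.1 z.2))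
    (Sstar : Y → X → ℝ) (hSstar : Sstar ∈ 𝒮)
    (hmin : ∀ S ∈ 𝒮,
      KL (fun z : Y × X => m z.1 * Sstar z.1 z.2) (fun z : Y × X => μ z.1 * P z.1 z.2)
        ≤ KL (fun z : Y × X => m z.1 * S z.1 z.2) (fun z : Y × X => μ z.1 * P z.1 z.2)) :
    R SstarTra ≤ R Sstar := by
  have key := hminTra Sstar hSstar
  rw [KL_joint_eq m hm.1 P SstarTra (fun y hy x => ((h𝒮 SstarTra hSstarTra y hy).1).1 x),
      KL_joint_eq m hm.1 P Sstar (fun y hy x => ((h𝒮 Sstar hSstar y hy).1).1 x)] at key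
  rw [hR SstarTra, hR Sstar]
  exact key
end

section
/- Let X = ∏_{i=1}^N X_i be a finite product of finite types and let p be a pmf on X whose marginals p_i are everywhere positive. Let Q be a log-convex set of everywhere-positive pmfs on X that contains the product of marginals ⊗_i p_i, and let q* ∈ Q minimize q ↦ KL(p ‖ q) over Q, with marginals q*_i. Then TC(p) ≥ KL(p ‖ q*) + TC(q*) + ∑_{i=1}^N KL(q*_i ‖ p_i). -/
open Finset

/-- The `i`-th marginal of a pmf on a finite product. -/
noncomputable def marginal {N : ℕ} {X : Fin N → Type*}
    [∀ i, Fintype (X i)] [∀ i, DecidableEq (X i)]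
    (p : (∀ i, X i) → ℝ) (i : Fin N) (a : X i) : ℝ :=
  ∑ x, if x i = a then p x else 0

/-- The total correlation of a pmf on a finite product: `TC(p) = KL(p ‖ ⊗_i p_i)`. -/
noncomputable def totalCorr {N : ℕ} {X : Fin N → Type*}
    [∀ i, Fintype (X i)] [∀ i, DecidableEq (X i)]
    (p : (∀ i, X i) → ℝ) : ℝ :=
  KL p (fun x => ∏ i, marginal p i (x i))

/-! ### Auxiliary lemmas -/

lemma KL_pos_eq {Y : Type*} [Fintype Y] (p q : Y → ℝ) [DecidablePred fun x => 0 < p x]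
    (hq : ∀ x, 0 < q x) :
    KL p q = ∑ x ∈ univ.filter (fun x => 0 < p x), p x * (Real.log (p x) - Real.log (q x)) := by
  rw [KL, Finset.sum_filter]
  refine Finset.sum_congr rfl fun x _ => ?_
  split
  · next hx => rw [Real.log_div (ne_of_gt hx) (ne_of_gt (hq x))]
  · rfl

lemma KL_all_pos {Y : Type*} [Fintype Y] (p q : Y → ℝ) (hp : ∀ x, 0 < p x) (hq : ∀ x, 0 < q x) :
    KL p q = ∑ x, p x * (Real.log (p x) - Real.log (q x)) := by
  rw [KL]
  refine Finset.sum_congr rfl fun x _ => ?_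
  rw [if_pos (hp x), Real.log_div (ne_of_gt (hp x)) (ne_of_gt (hq x))]

/-- The Pythagorean inequality for reverse I-projections. -/
lemma pythagorean {Y : Type*} [Fintype Y] (p q0 q1 : Y → ℝ)
    (hp0 : ∀ x, 0 ≤ p x) (hp1 : ∑ x, p x = 1)
    (hq0sum : ∑ x, q0 x = 1)
    (h0 : ∀ x, 0 < q0 x) (h1 : ∀ x, 0 < q1 x)
    (hmin : ∀ lam : ℝ, 0 < lam → lam ≤ 1 →
      KL p q0 ≤ KL p (fun x => q0 x ^ (1-lam) * q1 x ^ lam /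
        ∑ x', q0 x' ^ (1-lam) * q1 x' ^ lam)) :
    KL p q0 + KL q0 q1 ≤ KL p q1 := by
  classical
  set S := univ.filter fun x : Y => 0 < p x with hS
  have hS1 : ∑ x ∈ S, p x = 1 := by
    rw [← hp1]
    apply Finset.sum_subset (Finset.filter_subset _ _)
    intro x _ hx
    simp only [hS, Finset.mem_filter, Finset.mem_univ, true_and] at hx
    have := hp0 x; linarith
  set Z : ℝ → ℝ := fun lam => ∑ x, q0 x ^ (1-lam) * q1 x ^ lam with hZ
  have hYne : Nonempty Y := by
    by_contra h
    rw [not_nonempty_iff] at h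
    rw [Finset.univ_eq_empty, Finset.sum_empty] at hp1
    norm_num at hp1
  have hZpos : ∀ lam, 0 < Z lam := by
    intro lam
    apply Finset.sum_pos (fun x _ => ?_) Finset.univ_nonempty
    exact mul_pos (Real.rpow_pos_of_pos (h0 x) _) (Real.rpow_pos_of_pos (h1 x) _)
  have hZ0 : Z 0 = 1 := by
    simp only [hZ, sub_zero, Real.rpow_one, Real.rpow_zero, mul_one]
    exact hq0sum
  -- the minimality condition, in quantitative form
  have key : ∀ lam : ℝ, 0 < lam → lam ≤ 1 → lam * (KL p q0 - KL p q1) ≤ Z lam - 1 := by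
    intro lam hl0 hl1
    have hmix : (∀ x : Y, 0 < q0 x ^ (1-lam) * q1 x ^ lam / Z lam) := fun x =>
      div_pos (mul_pos (Real.rpow_pos_of_pos (h0 x) _) (Real.rpow_pos_of_pos (h1 x) _)) (hZpos lam)
    have hKLmix : KL p (fun x => q0 x ^ (1-lam) * q1 x ^ lam / Z lam)
        = (1-lam) * KL p q0 + lam * KL p q1 + Real.log (Z lam) := by
      rw [KL_pos_eq p _ hmix, KL_pos_eq p q0 h0, KL_pos_eq p q1 h1]
      rw [Finset.mul_sum, Finset.mul_sum, ← hS]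
      calc ∑ x ∈ S, p x * (Real.log (p x) - Real.log (q0 x ^ (1-lam) * q1 x ^ lam / Z lam))
          = ∑ x ∈ S, ((1-lam) * (p x * (Real.log (p x) - Real.log (q0 x)))
              + lam * (p x * (Real.log (p x) - Real.log (q1 x))) + p x * Real.log (Z lam)) := by
            refine Finset.sum_congr rfl fun x _ => ?_
            rw [Real.log_div (ne_of_gt (mul_pos (Real.rpow_pos_of_pos (h0 x) _)
                (Real.rpow_pos_of_pos (h1 x) _))) (ne_of_gt (hZpos lam)),
              Real.log_mul (ne_of_gt (Real.rpow_pos_of_pos (h0 x) _))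
                (ne_of_gt (Real.rpow_pos_of_pos (h1 x) _)),
              Real.log_rpow (h0 x), Real.log_rpow (h1 x)]
            ring
        _ = (1-lam) * (∑ x ∈ S, p x * (Real.log (p x) - Real.log (q0 x)))
              + lam * (∑ x ∈ S, p x * (Real.log (p x) - Real.log (q1 x)))
              + Real.log (Z lam) := by
            rw [Finset.sum_add_distrib, Finset.sum_add_distrib, ← Finset.mul_sum,
              ← Finset.mul_sum, ← Finset.sum_mul, hS1, one_mul]
        _ = _ := by rw [Finset.mul_sum, Finset.mul_sum]
    have h := hmin lam hl0 hl1
    rw [show (fun x => q0 x ^ (1-lam) * q1 x ^ lam / ∑ x', q0 x' ^ (1-lam) * q1 x' ^ lam)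
        = fun x => q0 x ^ (1-lam) * q1 x ^ lam / Z lam from rfl, hKLmix] at h
    have hlog := Real.log_le_sub_one_of_pos (hZpos lam)
    nlinarith [hlog]
  -- derivative of Z at 0
  set D : ℝ := ∑ x, q0 x * (Real.log (q1 x) - Real.log (q0 x)) with hD
  have hZexp : Z = fun lam => ∑ x, q0 x * Real.exp (lam * (Real.log (q1 x) - Real.log (q0 x))) := by
    funext lam
    refine Finset.sum_congr rfl fun x _ => ?_
    rw [Real.rpow_def_of_pos (h0 x), Real.rpow_def_of_pos (h1 x), ← Real.exp_add,
      show Real.log (q0 x) * (1-lam) + Real.log (q1 x) * lam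
        = Real.log (q0 x) + lam * (Real.log (q1 x) - Real.log (q0 x)) by ring,
      Real.exp_add, Real.exp_log (h0 x)]
  have hderiv : HasDerivAt Z D 0 := by
    rw [hZexp, hD]
    apply HasDerivAt.fun_sum
    intro x _
    have h1' : HasDerivAt (fun lam : ℝ => lam * (Real.log (q1 x) - Real.log (q0 x)))
        (Real.log (q1 x) - Real.log (q0 x)) 0 := by
      simpa using (hasDerivAt_id (0:ℝ)).mul_const (Real.log (q1 x) - Real.log (q0 x))
    have h2' := (Real.hasDerivAt_exp (0 * (Real.log (q1 x) - Real.log (q0 x)))).comp 0 h1'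
    simpa using h2'.const_mul (q0 x)
  -- pass to the limit
  have hslope : Filter.Tendsto (fun lam => (Z lam - 1) / lam) (nhdsWithin 0 (Set.Ioi 0)) (nhds D) := by
    have := hasDerivAt_iff_tendsto_slope.mp hderiv
    have h2 := this.mono_left (nhdsWithin_mono 0 (by intro x hx; exact ne_of_gt hx))
    refine h2.congr' ?_
    filter_upwards [self_mem_nhdsWithin] with lam hlam
    simp [slope, hZ0, div_eq_inv_mul]
  have hge : KL p q0 - KL p q1 ≤ D := by
    refine ge_of_tendsto hslope ?_
    filter_upwards [Ioc_mem_nhdsGT_of_mem (by constructor <;> norm_num : (0:ℝ) ∈ Set.Ico 0 1)]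
      with lam hlam
    exact (le_div_iff₀ hlam.1).mpr (by linarith [key lam hlam.1 hlam.2])
  have hKLq : KL q0 q1 = -D := by
    rw [KL_all_pos q0 q1 h0 h1, hD, ← Finset.sum_neg_distrib]
    exact Finset.sum_congr rfl fun x _ => by ring
  linarith

section marg
variable {N : ℕ} {X : Fin N → Type*} [∀ i, Fintype (X i)] [∀ i, DecidableEq (X i)]

lemma marg_mul_sum (q : (∀ i, X i) → ℝ) (i : Fin N) (g : X i → ℝ) :
    ∑ a, marginal q i a * g a = ∑ x, q x * g (x i) := by
  unfold marginal
  simp_rw [Finset.sum_mul, ite_mul, zero_mul]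
  rw [Finset.sum_comm]
  refine Finset.sum_congr rfl fun x _ => ?_
  rw [Finset.sum_ite_eq]
  simp

lemma marg_pos [Nonempty (∀ i, X i)] (q : (∀ i, X i) → ℝ) (hq : ∀ x, 0 < q x)
    (i : Fin N) (a : X i) : 0 < marginal q i a := by
  obtain ⟨x0⟩ := ‹Nonempty (∀ i, X i)›
  unfold marginal
  apply Finset.sum_pos' (fun x _ => by split; exacts [le_of_lt (hq x), le_rfl])
  refine ⟨Function.update x0 i a, Finset.mem_univ _, ?_⟩
  rw [if_pos (Function.update_self i a x0)]
  exact hq _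

/-- Decomposition: `KL(q ‖ ⊗ p_i) = TC(q) + ∑ KL(q_i ‖ p_i)`. -/
lemma KL_decomp [Nonempty (∀ i, X i)] (p q : (∀ i, X i) → ℝ)
    (hq : ∀ x, 0 < q x) (hpi : ∀ i a, 0 < marginal p i a) :
    KL q (fun x => ∏ i, marginal p i (x i))
      = totalCorr q + ∑ i, KL (marginal q i) (marginal p i) := by
  have hmq : ∀ i a, 0 < marginal q i a := fun i a => marg_pos q hq i a
  rw [totalCorr,
    KL_all_pos q _ hq (fun x => Finset.prod_pos (fun i _ => hpi i (x i))),
    KL_all_pos q _ hq (fun x => Finset.prod_pos (fun i _ => hmq i (x i)))]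
  have hKLi : ∀ i : Fin N, KL (marginal q i) (marginal p i)
      = ∑ x, q x * (Real.log (marginal q i (x i)) - Real.log (marginal p i (x i))) := by
    intro i
    rw [KL_all_pos _ _ (hmq i) (hpi i),
      marg_mul_sum q i (fun a => Real.log (marginal q i a) - Real.log (marginal p i a))]
  simp_rw [hKLi]
  rw [Finset.sum_comm, ← Finset.sum_add_distrib]
  refine Finset.sum_congr rfl fun x _ => ?_
  rw [Real.log_prod (fun i _ => ne_of_gt (hpi i (x i))),
    Real.log_prod (fun i _ => ne_of_gt (hmq i (x i))),
    ← Finset.mul_sum, ← mul_add]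
  congr 1
  rw [Finset.sum_sub_distrib]
  ring

end marg

/-- If `q*` is the reverse I-projection of `p` onto a log-convex set `Q` of
everywhere-positive pmfs containing the product of the marginals of `p`, then
`TC(p) ≥ KL(p ‖ q*) + TC(q*) + ∑_i KL(q*_i ‖ p_i)`. -/
theorem tc_pythagorean {N : ℕ} {X : Fin N → Type*}
    [∀ i, Fintype (X i)] [∀ i, DecidableEq (X i)]
    (p : (∀ i, X i) → ℝ) (hp : IsPmf p)
    (hppos : ∀ i a, 0 < marginal p i a)
    (Q : Set ((∀ i, X i) → ℝ))
    (hQ : ∀ q ∈ Q, IsPmf q ∧ ∀ x, 0 < q x)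
    (hlc : LogConvexSet Q)
    (hprod : (fun x => ∏ i, marginal p i (x i)) ∈ Q)
    (qstar : (∀ i, X i) → ℝ) (hqstar : qstar ∈ Q)
    (hmin : ∀ q ∈ Q, KL p qstar ≤ KL p q) :
    KL p qstar + totalCorr qstar + ∑ i, KL (marginal qstar i) (marginal p i)
      ≤ totalCorr p := by
  classical
  have hYne : Nonempty (∀ i, X i) := by
    by_contra h
    rw [not_nonempty_iff] at h
    have := hp.2
    rw [Finset.univ_eq_empty, Finset.sum_empty] at this
    norm_num at this
  obtain ⟨hqsPmf, hqsPos⟩ := hQ qstar hqstar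
  obtain ⟨hπPmf, hπPos⟩ := hQ _ hprod
  have hpyth : KL p qstar + KL qstar (fun x => ∏ i, marginal p i (x i))
      ≤ KL p (fun x => ∏ i, marginal p i (x i)) := by
    apply pythagorean p qstar _ hp.1 hp.2 hqsPmf.2 hqsPos hπPos
    intro lam hl0 hl1
    exact hmin _ (hlc qstar hqstar _ hprod lam (le_of_lt hl0) hl1)
  have hdec := KL_decomp p qstar hqsPos hppos
  have hTC : totalCorr p = KL p (fun x => ∏ i, marginal p i (x i)) := rfl
  linarith
end

section
/- Let X = ∏_{i=1}^N X_i be a finite product of finite types and let p be a pmf on X whose marginals p_i are everywhere positive. Let Q be a log-convex set of everywhere-positive pmfs on X that contains the product of marginals ⊗_i p_i, and let q* ∈ Q minimize q ↦ KL(p ‖ q) over Q. Then TC(q*) ≤ TC(p); that is, the reverse I-projection of p onto Q has total correlation no larger than that of p. -/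
open Finset

-- Gibbs
lemma gibbs {Y : Type*} [Fintype Y] (p q : Y → ℝ)
    (hp0 : ∀ x, 0 ≤ p x) (hp1 : ∑ x, p x = 1)
    (hq0 : ∀ x, 0 ≤ q x) (hq1 : ∑ x, q x ≤ 1)
    (hpos : ∀ x, 0 < p x → 0 < q x) : 0 ≤ KL p q := by
  have key : ∀ x, p x - q x ≤ (if 0 < p x then p x * Real.log (p x / q x) else 0) := by
    intro x
    by_cases h : 0 < p x
    · have hqx := hpos x h
      have h2 : Real.log (q x) - Real.log (p x) ≤ q x / p x - 1 := by
        rw [← Real.log_div hqx.ne' h.ne']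
        exact Real.log_le_sub_one_of_pos (div_pos hqx h)
      have h3 : p x * (q x / p x) = q x := by field_simp
      have h4 := mul_le_mul_of_nonneg_left h2 h.le
      rw [mul_sub, mul_sub, h3] at h4
      rw [if_pos h, Real.log_div h.ne' hqx.ne', mul_sub]
      linarith
    · have hx0 : p x = 0 := le_antisymm (not_lt.mp h) (hp0 x)
      rw [if_neg h, hx0]
      linarith [hq0 x]
  calc (0:ℝ) ≤ 1 - ∑ x, q x := by linarith
    _ = ∑ x, p x - ∑ x, q x := by rw [hp1]
    _ = ∑ x, (p x - q x) := (Finset.sum_sub_distrib _ _).symm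
    _ ≤ _ := Finset.sum_le_sum (fun x _ => key x)

lemma slope_bound {f : ℝ → ℝ} {d c : ℝ} (hf : HasDerivAt f d 0) (h0 : f 0 = 0)
    (hb : ∀ lam : ℝ, 0 < lam → lam ≤ 1 → -(c * lam) ≤ f lam) : -c ≤ d := by
  have h := (hf.hasDerivWithinAt (s := Set.Ioi (0:ℝ)))
  rw [hasDerivWithinAt_iff_tendsto_slope] at h
  have hs : Set.Ioi (0:ℝ) \ {0} = Set.Ioi 0 := by
    apply Set.diff_singleton_eq_self
    simp
  rw [hs] at h
  refine ge_of_tendsto h ?_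
  filter_upwards [Ioo_mem_nhdsGT_of_mem (by constructor <;> norm_num : (0:ℝ) ∈ Set.Ico 0 1)] with lam hlam
  have hl0 : 0 < lam := hlam.1
  have := hb lam hl0 hlam.2.le
  rw [slope_def_field, h0, sub_zero, sub_zero, le_div_iff₀ hl0]
  linarith

section Marg
variable {N : ℕ} {X : Fin N → Type*} [∀ i, Fintype (X i)] [∀ i, DecidableEq (X i)]
  (q : (∀ i, X i) → ℝ)

lemma marginal_nonneg (h : ∀ x, 0 ≤ q x) (i : Fin N) (a : X i) :
    0 ≤ marginal q i a :=
  Finset.sum_nonneg (fun x _ => by split <;> simp [h x])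

lemma marginal_pos [Nonempty (∀ i, X i)] (h : ∀ x, 0 < q x) (i : Fin N) (a : X i) :
    0 < marginal q i a := by
  obtain ⟨x₀⟩ := ‹Nonempty (∀ i, X i)›
  refine Finset.sum_pos' (fun x _ => by split <;> simp [(h x).le]) ⟨Function.update x₀ i a, Finset.mem_univ _, ?_⟩
  rw [if_pos (Function.update_self i a x₀)]
  exact h _

lemma sum_marginal (i : Fin N) : ∑ a, marginal q i a = ∑ x, q x := by
  unfold marginal
  rw [Finset.sum_comm]
  exact Finset.sum_congr rfl (fun x _ => by simp)

lemma sum_mul_marginal (i : Fin N) (f : X i → ℝ) :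
    ∑ a, f a * marginal q i a = ∑ x, f (x i) * q x := by
  unfold marginal
  simp_rw [Finset.mul_sum]
  rw [Finset.sum_comm]
  refine Finset.sum_congr rfl (fun x _ => ?_)
  simp [mul_ite]

-- step 2: totalCorr q ≤ KL q (⊗ p_i)
lemma tc_le_kl_prod (p : (∀ i, X i) → ℝ) (hq : IsPmf q) (hqpos : ∀ x, 0 < q x)
    (hppos : ∀ i a, 0 < marginal p i a) (hpsum : ∑ x, p x = 1) :
    totalCorr q ≤ KL q (fun x => ∏ i, marginal p i (x i)) := by
  have hnonempty : Nonempty (∀ i, X i) := by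
    by_contra h
    have : IsEmpty (∀ i, X i) := not_nonempty_iff.mp h
    have := hq.2
    rw [Finset.univ_eq_empty, Finset.sum_empty] at this
    norm_num at this
  have hqmpos := marginal_pos q hqpos
  have key : KL q (fun x => ∏ i, marginal p i (x i)) - totalCorr q
      = ∑ i, KL (marginal q i) (marginal p i) := by
    unfold totalCorr KL
    rw [← Finset.sum_sub_distrib]
    have lhs_eq : ∀ x : (∀ i, X i),
        (if 0 < q x then q x * Real.log (q x / ∏ i, marginal p i (x i)) else 0)
          - (if 0 < q x then q x * Real.log (q x / ∏ i, marginal q i (x i)) else 0)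
        = ∑ i, (Real.log (marginal q i (x i)) - Real.log (marginal p i (x i))) * q x := by
      intro x
      rw [if_pos (hqpos x), if_pos (hqpos x)]
      have hP : ∀ i, (marginal p i (x i)) ≠ 0 := fun i => (hppos i _).ne'
      have hQm : ∀ i, (marginal q i (x i)) ≠ 0 := fun i => (hqmpos i _).ne'
      rw [Real.log_div (hqpos x).ne' (Finset.prod_ne_zero_iff.mpr (fun i _ => hP i)),
        Real.log_div (hqpos x).ne' (Finset.prod_ne_zero_iff.mpr (fun i _ => hQm i)),
        Real.log_prod (fun i _ => hP i), Real.log_prod (fun i _ => hQm i),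
        ← Finset.sum_mul, mul_comm, Finset.sum_sub_distrib]
      ring
    rw [Finset.sum_congr rfl (fun x _ => lhs_eq x), Finset.sum_comm]
    refine Finset.sum_congr rfl (fun i _ => ?_)
    rw [← sum_mul_marginal q i (fun a => Real.log (marginal q i a) - Real.log (marginal p i a))]
    refine Finset.sum_congr rfl (fun a _ => ?_)
    rw [if_pos (hqmpos i a), Real.log_div (hqmpos i a).ne' (hppos i a).ne']
    ring
  have hnn : ∀ i ∈ Finset.univ, (0:ℝ) ≤ KL (marginal q i) (marginal p i) := by
    intro i _
    refine gibbs _ _ (fun a => (hqmpos i a).le) ?_ (fun a => (hppos i a).le) ?_ (fun a _ => hppos i a)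
    · rw [sum_marginal, hq.2]
    · rw [sum_marginal, hpsum]
  linarith [Finset.sum_nonneg hnn, key.ge]
end Marg

section Main
variable {Y : Type*} [Fintype Y]

lemma Z_hasDerivAt (q₀ q₁ : Y → ℝ) (h0 : ∀ x, 0 < q₀ x) (h1 : ∀ x, 0 < q₁ x) :
    HasDerivAt (fun lam : ℝ => ∑ x, q₀ x ^ (1 - lam) * q₁ x ^ lam)
      (∑ x, q₀ x * (Real.log (q₁ x) - Real.log (q₀ x))) 0 := by
  have heq : (fun lam : ℝ => ∑ x, q₀ x ^ (1 - lam) * q₁ x ^ lam)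
      = fun lam : ℝ => ∑ x, Real.exp (Real.log (q₀ x) + lam * (Real.log (q₁ x) - Real.log (q₀ x))) := by
    funext lam
    refine Finset.sum_congr rfl (fun x _ => ?_)
    rw [Real.rpow_def_of_pos (h0 x), Real.rpow_def_of_pos (h1 x), ← Real.exp_add]
    congr 1; ring
  rw [heq]
  refine HasDerivAt.fun_sum (fun x _ => ?_)
  have hlin : HasDerivAt (fun lam : ℝ => Real.log (q₀ x) + lam * (Real.log (q₁ x) - Real.log (q₀ x)))
      (Real.log (q₁ x) - Real.log (q₀ x)) 0 := by
    simpa using ((hasDerivAt_id (0:ℝ)).mul_const (Real.log (q₁ x) - Real.log (q₀ x))).const_add (Real.log (q₀ x))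
  have := hlin.exp
  simpa [Real.exp_log (h0 x)] using this

-- Pythagorean-type inequality
lemma kl_pythagoras {Q : Set (Y → ℝ)} (hlc : LogConvexSet Q)
    (p q₀ q₁ : Y → ℝ) (hp : IsPmf p)
    (h0 : ∀ x, 0 < q₀ x) (h1 : ∀ x, 0 < q₁ x)
    (hq₀ : q₀ ∈ Q) (hq₁ : q₁ ∈ Q) (hq₀sum : ∑ x, q₀ x = 1)
    (hmin : ∀ q ∈ Q, KL p q₀ ≤ KL p q) :
    KL q₀ q₁ ≤ KL p q₁ - KL p q₀ := by
  set Z : ℝ → ℝ := fun lam => ∑ x, q₀ x ^ (1 - lam) * q₁ x ^ lam with hZdef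
  have hne : Nonempty Y := by
    by_contra h
    have : IsEmpty Y := not_nonempty_iff.mp h
    have := hp.2
    rw [Finset.univ_eq_empty, Finset.sum_empty] at this
    norm_num at this
  have hZpos : ∀ lam, 0 < Z lam :=
    fun lam => Finset.sum_pos (fun x _ => mul_pos (Real.rpow_pos_of_pos (h0 x) _)
      (Real.rpow_pos_of_pos (h1 x) _)) Finset.univ_nonempty
  have hZ0 : Z 0 = 1 := by
    simp only [hZdef, sub_zero, Real.rpow_one, Real.rpow_zero, mul_one]
    exact hq₀sum
  -- the identity
  have hident : ∀ lam : ℝ,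
      KL p (fun x => q₀ x ^ (1 - lam) * q₁ x ^ lam / Z lam)
        = (1 - lam) * KL p q₀ + lam * KL p q₁ + Real.log (Z lam) := by
    intro lam
    unfold KL
    have hsum1 : ∑ x, (if 0 < p x then p x else 0) = 1 := by
      rw [← hp.2]
      refine Finset.sum_congr rfl (fun x _ => ?_)
      by_cases h : 0 < p x
      · rw [if_pos h]
      · rw [if_neg h, le_antisymm (not_lt.mp h) (hp.1 x)]
    have term_eq : ∀ x : Y,
        (if 0 < p x then p x * Real.log (p x / (q₀ x ^ (1 - lam) * q₁ x ^ lam / Z lam)) else 0)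
        = (1 - lam) * (if 0 < p x then p x * Real.log (p x / q₀ x) else 0)
          + lam * (if 0 < p x then p x * Real.log (p x / q₁ x) else 0)
          + (if 0 < p x then p x else 0) * Real.log (Z lam) := by
      intro x
      by_cases hx : 0 < p x
      · rw [if_pos hx, if_pos hx, if_pos hx, if_pos hx]
        have hA : (0:ℝ) < q₀ x ^ (1 - lam) * q₁ x ^ lam :=
          mul_pos (Real.rpow_pos_of_pos (h0 x) _) (Real.rpow_pos_of_pos (h1 x) _)
        rw [Real.log_div hx.ne' (div_pos hA (hZpos lam)).ne',
          Real.log_div hA.ne' (hZpos lam).ne',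
          Real.log_mul (Real.rpow_pos_of_pos (h0 x) _).ne' (Real.rpow_pos_of_pos (h1 x) _).ne',
          Real.log_rpow (h0 x), Real.log_rpow (h1 x),
          Real.log_div hx.ne' (h0 x).ne', Real.log_div hx.ne' (h1 x).ne']
        ring
      · simp [hx]
    rw [Finset.sum_congr rfl (fun x _ => term_eq x), Finset.sum_add_distrib,
      Finset.sum_add_distrib, ← Finset.mul_sum, ← Finset.mul_sum, ← Finset.sum_mul, hsum1, one_mul]
  -- the lower bound on log Z
  have hbound : ∀ lam : ℝ, 0 < lam → lam ≤ 1 →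
      -((KL p q₁ - KL p q₀) * lam) ≤ Real.log (Z lam) := by
    intro lam hl0 hl1
    have hmem := hlc q₀ hq₀ q₁ hq₁ lam hl0.le hl1
    have := hmin _ hmem
    rw [hident lam] at this
    linarith
  have hF : HasDerivAt (fun lam => Real.log (Z lam))
      ((∑ x, q₀ x * (Real.log (q₁ x) - Real.log (q₀ x))) / Z 0) 0 :=
    (Z_hasDerivAt q₀ q₁ h0 h1).log ((hZpos 0).ne')
  rw [hZ0, div_one] at hF
  have hlog0 : Real.log (Z 0) = 0 := by rw [hZ0, Real.log_one]
  have := slope_bound hF hlog0 hbound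
  have hKLeq : KL q₀ q₁ = -∑ x, q₀ x * (Real.log (q₁ x) - Real.log (q₀ x)) := by
    unfold KL
    rw [← Finset.sum_neg_distrib]
    refine Finset.sum_congr rfl (fun x _ => ?_)
    rw [if_pos (h0 x), Real.log_div (h0 x).ne' (h1 x).ne']
    ring
  rw [hKLeq]
  linarith
end Main

/-- The reverse I-projection of `p` onto a log-convex set `Q` of everywhere-positive
pmfs containing the product of marginals of `p` has total correlation no larger than
that of `p`. -/
theorem tc_of_projection_le {N : ℕ} {X : Fin N → Type*}
    [∀ i, Fintype (X i)] [∀ i, DecidableEq (X i)]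
    (p : (∀ i, X i) → ℝ) (hp : IsPmf p)
    (hppos : ∀ i a, 0 < marginal p i a)
    (Q : Set ((∀ i, X i) → ℝ))
    (hQ : ∀ q ∈ Q, IsPmf q ∧ ∀ x, 0 < q x)
    (hlc : LogConvexSet Q)
    (hprod : (fun x => ∏ i, marginal p i (x i)) ∈ Q)
    (qstar : (∀ i, X i) → ℝ) (hqstar : qstar ∈ Q)
    (hmin : ∀ q ∈ Q, KL p qstar ≤ KL p q) :
    totalCorr qstar ≤ totalCorr p := by
  obtain ⟨hqs_pmf, hqs_pos⟩ := hQ qstar hqstar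
  obtain ⟨hP_pmf, hP_pos⟩ := hQ _ hprod
  set P : (∀ i, X i) → ℝ := fun x => ∏ i, marginal p i (x i) with hPdef
  -- Pythagorean inequality
  have hpyth : KL qstar P ≤ KL p P - KL p qstar :=
    kl_pythagoras hlc p qstar P hp hqs_pos hP_pos hqstar hprod hqs_pmf.2 hmin
  -- KL p qstar ≥ 0
  have hkl0 : 0 ≤ KL p qstar :=
    gibbs p qstar hp.1 hp.2 (fun x => (hqs_pos x).le) hqs_pmf.2.le (fun x _ => hqs_pos x)
  -- totalCorr qstar ≤ KL qstar P
  have htc : totalCorr qstar ≤ KL qstar P :=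
    tc_le_kl_prod qstar p hqs_pmf hqs_pos hppos hp.2
  have : totalCorr p = KL p P := rfl
  linarith
end

section
/- Let X be a finite type and let p and q be everywhere-positive pmfs on X. For every function d : X → (0,1), the binary cross-entropy discriminator loss L(d) = −∑_x p(x)·log d(x) − ∑_x q(x)·log(1 − d(x)) satisfies L(d) ≥ L(d*), where d*(x) = p(x)/(p(x)+q(x)); moreover, equality holds if and only if d = d*. Equivalently, the optimal discriminator between real samples from p and fake samples from q is d*(x) = σ(log(p(x)/q(x))). -/
open Finset

/-- The logistic sigmoid `σ(t) = 1/(1+e^{−t})`. -/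
noncomputable def sigmoid (t : ℝ) : ℝ := 1 / (1 + Real.exp (-t))

/-- The binary cross-entropy discriminator loss for real distribution `p`,
fake distribution `q`, and discriminator `d`. -/
noncomputable def BCELoss {X : Type*} [Fintype X] (p q d : X → ℝ) : ℝ :=
  -∑ x, p x * Real.log (d x) - ∑ x, q x * Real.log (1 - d x)

private lemma gibbs_le (a b t : ℝ) (ha : 0 < a) (hb : 0 < b) (ht0 : 0 < t) (ht1 : t < 1) :
    a * Real.log t + b * Real.log (1 - t)
      ≤ a * Real.log (a / (a + b)) + b * Real.log (b / (a + b)) := by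
  have hs : 0 < a + b := by linarith
  have h1t : 0 < 1 - t := by linarith
  have e1 : Real.log (t * (a + b) / a) = Real.log t - Real.log (a / (a + b)) := by
    rw [Real.log_div (by positivity) ha.ne', Real.log_mul ht0.ne' hs.ne',
      Real.log_div ha.ne' hs.ne']; ring
  have e2 : Real.log ((1 - t) * (a + b) / b) = Real.log (1 - t) - Real.log (b / (a + b)) := by
    rw [Real.log_div (mul_pos h1t hs).ne' hb.ne',
      Real.log_mul h1t.ne' hs.ne', Real.log_div hb.ne' hs.ne']; ring
  have h1 := Real.log_le_sub_one_of_pos (show (0:ℝ) < t * (a + b) / a by positivity)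
  have h2 := Real.log_le_sub_one_of_pos (div_pos (mul_pos h1t hs) hb)
  have h1' : a * (Real.log t - Real.log (a / (a + b))) ≤ t * (a + b) - a := by
    rw [← e1]
    calc a * Real.log (t * (a + b) / a) ≤ a * (t * (a + b) / a - 1) :=
          mul_le_mul_of_nonneg_left h1 ha.le
      _ = t * (a + b) - a := by field_simp
  have h2' : b * (Real.log (1 - t) - Real.log (b / (a + b))) ≤ (1 - t) * (a + b) - b := by
    rw [← e2]
    calc b * Real.log ((1 - t) * (a + b) / b) ≤ b * ((1 - t) * (a + b) / b - 1) :=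
          mul_le_mul_of_nonneg_left h2 hb.le
      _ = (1 - t) * (a + b) - b := by field_simp
  nlinarith [h1', h2']

private lemma gibbs_lt (a b t : ℝ) (ha : 0 < a) (hb : 0 < b) (ht0 : 0 < t) (ht1 : t < 1)
    (hne : t ≠ a / (a + b)) :
    a * Real.log t + b * Real.log (1 - t)
      < a * Real.log (a / (a + b)) + b * Real.log (b / (a + b)) := by
  have hs : 0 < a + b := by linarith
  have h1t : 0 < 1 - t := by linarith
  have e1 : Real.log (t * (a + b) / a) = Real.log t - Real.log (a / (a + b)) := by
    rw [Real.log_div (by positivity) ha.ne', Real.log_mul ht0.ne' hs.ne',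
      Real.log_div ha.ne' hs.ne']; ring
  have e2 : Real.log ((1 - t) * (a + b) / b) = Real.log (1 - t) - Real.log (b / (a + b)) := by
    rw [Real.log_div (mul_pos h1t hs).ne' hb.ne',
      Real.log_mul h1t.ne' hs.ne', Real.log_div hb.ne' hs.ne']; ring
  have hne1 : t * (a + b) / a ≠ 1 := by
    intro h
    apply hne
    field_simp at h
    field_simp
    linarith
  have h1 := Real.log_lt_sub_one_of_pos (show (0:ℝ) < t * (a + b) / a by positivity) hne1
  have h2 := Real.log_le_sub_one_of_pos (div_pos (mul_pos h1t hs) hb)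
  have h1' : a * (Real.log t - Real.log (a / (a + b))) < t * (a + b) - a := by
    rw [← e1]
    calc a * Real.log (t * (a + b) / a) < a * (t * (a + b) / a - 1) :=
          (mul_lt_mul_iff_right₀ ha).2 h1
      _ = t * (a + b) - a := by field_simp
  have h2' : b * (Real.log (1 - t) - Real.log (b / (a + b))) ≤ (1 - t) * (a + b) - b := by
    rw [← e2]
    calc b * Real.log ((1 - t) * (a + b) / b) ≤ b * ((1 - t) * (a + b) / b - 1) :=
          mul_le_mul_of_nonneg_left h2 hb.le
      _ = (1 - t) * (a + b) - b := by field_simp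
  nlinarith [h1', h2']

private lemma bce_sum {X : Type*} [Fintype X] (p q d : X → ℝ) :
    BCELoss p q d = -∑ x, (p x * Real.log (d x) + q x * Real.log (1 - d x)) := by
  unfold BCELoss
  rw [Finset.sum_add_distrib]
  ring

/-- The optimal discriminator between real samples from `p` and fake samples from `q`
is `d*(x) = p(x)/(p(x)+q(x)) = σ(log(p(x)/q(x)))`: every discriminator `d` with values
in `(0,1)` has loss at least that of `d*`, with equality iff `d = d*`. -/
theorem optimal_discriminator {X : Type*} [Fintype X]
    (p q : X → ℝ)
    (hp : (∀ x, 0 < p x) ∧ ∑ x, p x = 1)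
    (hq : (∀ x, 0 < q x) ∧ ∑ x, q x = 1)
    (d : X → ℝ) (hd : ∀ x, 0 < d x ∧ d x < 1) :
    (BCELoss p q (fun x => p x / (p x + q x)) ≤ BCELoss p q d)
    ∧ (BCELoss p q d = BCELoss p q (fun x => p x / (p x + q x))
        ↔ d = fun x => p x / (p x + q x))
    ∧ (∀ x, p x / (p x + q x) = sigmoid (Real.log (p x / q x))) := by
  obtain ⟨hp0, -⟩ := hp
  obtain ⟨hq0, -⟩ := hq
  have hkey : ∀ x, p x * Real.log (d x) + q x * Real.log (1 - d x)
      ≤ p x * Real.log (p x / (p x + q x)) + q x * Real.log (q x / (p x + q x)) := by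
    intro x
    exact gibbs_le (p x) (q x) (d x) (hp0 x) (hq0 x) (hd x).1 (hd x).2
  have heq2 : ∀ x, 1 - p x / (p x + q x) = q x / (p x + q x) := by
    intro x
    have hs : p x + q x ≠ 0 := by have := hp0 x; have := hq0 x; positivity
    field_simp
    ring
  have hstar : BCELoss p q (fun x => p x / (p x + q x))
      = -∑ x, (p x * Real.log (p x / (p x + q x)) + q x * Real.log (q x / (p x + q x))) := by
    rw [bce_sum]
    congr 1
    refine Finset.sum_congr rfl fun x _ => ?_
    rw [heq2 x]
  refine ⟨?_, ⟨?_, ?_⟩, ?_⟩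
  · rw [hstar, bce_sum, neg_le_neg_iff]
    exact Finset.sum_le_sum fun x _ => hkey x
  · intro h
    by_contra hne
    have : ∃ x, d x ≠ p x / (p x + q x) := by
      by_contra hall
      push_neg at hall
      exact hne (funext hall)
    obtain ⟨x0, hx0⟩ := this
    have hlt : ∑ x, (p x * Real.log (d x) + q x * Real.log (1 - d x))
        < ∑ x, (p x * Real.log (p x / (p x + q x)) + q x * Real.log (q x / (p x + q x))) := by
      refine Finset.sum_lt_sum (fun x _ => hkey x) ⟨x0, Finset.mem_univ x0, ?_⟩
      exact gibbs_lt (p x0) (q x0) (d x0) (hp0 x0) (hq0 x0) (hd x0).1 (hd x0).2 hx0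
    rw [hstar, bce_sum] at h
    have := neg_injective h
    linarith
  · rintro rfl; rfl
  · intro x
    have hpx := hp0 x
    have hqx := hq0 x
    have hpq : 0 < p x / q x := by positivity
    unfold sigmoid
    rw [Real.exp_neg, Real.exp_log hpq]
    rw [show (p x / q x)⁻¹ = q x / p x by field_simp]
    field_simp
end

section
/- Let X be a finite type and let p_data and p_ref be everywhere-positive pmfs on X. Define the Direct Discriminative Optimization objective on everywhere-positive pmfs p by L(p) = −∑_x p_data(x)·log σ(log(p(x)/p_ref(x))) − ∑_x p_ref(x)·log(1 − σ(log(p(x)/p_ref(x)))). Then L(p) ≥ L(p_data) for every everywhere-positive pmf p on X, and L(p) = L(p_data) if and only if p = p_data; that is, the global minimizer of the DDO objective is the data distribution. -/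
open Finset

/-- The Direct Discriminative Optimization (DDO) objective for data distribution
`pdata`, reference distribution `pref`, and model `p`. -/
noncomputable def DDOLoss {X : Type*} [Fintype X] (pdata pref p : X → ℝ) : ℝ :=
  -∑ x, pdata x * Real.log (sigmoid (Real.log (p x / pref x)))
  - ∑ x, pref x * Real.log (1 - sigmoid (Real.log (p x / pref x)))

lemma sigmoid_log_div {a b : ℝ} (ha : 0 < a) (hb : 0 < b) :
    sigmoid (Real.log (a / b)) = a / (a + b) := by
  unfold sigmoid
  rw [← Real.log_inv, Real.exp_log (by positivity), inv_div]
  field_simp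

lemma one_sub_sigmoid_log_div {a b : ℝ} (ha : 0 < a) (hb : 0 < b) :
    1 - sigmoid (Real.log (a / b)) = b / (a + b) := by
  rw [sigmoid_log_div ha hb]
  field_simp
  ring

/-- Key pointwise lemma. -/
lemma ddo_key {c d a : ℝ} (hc : 0 < c) (hd : 0 < d) (ha : 0 < a) :
    (-(c * Real.log (c / (c + d))) - d * Real.log (d / (c + d)))
      ≤ (-(c * Real.log (a / (a + d))) - d * Real.log (d / (a + d)))
    ∧ (a ≠ c →
      (-(c * Real.log (c / (c + d))) - d * Real.log (d / (c + d)))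
      < (-(c * Real.log (a / (a + d))) - d * Real.log (d / (a + d)))) := by
  have hcd : 0 < c + d := by linarith
  have had : 0 < a + d := by linarith
  set t1 : ℝ := a * (c + d) / (c * (a + d)) with ht1
  set t2 : ℝ := (c + d) / (a + d) with ht2
  have ht1pos : 0 < t1 := by positivity
  have ht2pos : 0 < t2 := by positivity
  have hsum : c * t1 + d * t2 = c + d := by
    rw [ht1, ht2]; field_simp
  have hlog1 : Real.log t1 = Real.log a + Real.log (c + d) - Real.log c - Real.log (a + d) := by
    rw [ht1, Real.log_div (by positivity) (by positivity),
      Real.log_mul ha.ne' hcd.ne', Real.log_mul hc.ne' had.ne']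
    ring
  have hlog2 : Real.log t2 = Real.log (c + d) - Real.log (a + d) :=
    Real.log_div hcd.ne' had.ne'
  have hD : (-(c * Real.log (a / (a + d))) - d * Real.log (d / (a + d)))
      - (-(c * Real.log (c / (c + d))) - d * Real.log (d / (c + d)))
      = -(c * Real.log t1 + d * Real.log t2) := by
    rw [hlog1, hlog2, Real.log_div ha.ne' had.ne', Real.log_div hc.ne' hcd.ne',
      Real.log_div hd.ne' had.ne', Real.log_div hd.ne' hcd.ne']
    ring
  have hle2 : Real.log t2 ≤ t2 - 1 := Real.log_le_sub_one_of_pos ht2pos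
  constructor
  · have hle1 : Real.log t1 ≤ t1 - 1 := Real.log_le_sub_one_of_pos ht1pos
    nlinarith [hsum]
  · intro hne
    have ht1ne : t1 ≠ 1 := by
      intro h
      apply hne
      have : a * (c + d) = c * (a + d) := by
        rw [ht1, div_eq_one_iff_eq (by positivity)] at h; linarith
      nlinarith
    have hlt1 : Real.log t1 < t1 - 1 := by
      rcases lt_or_gt_of_ne ht1ne with h | h
      · nlinarith [Real.add_one_le_exp (Real.log t1), Real.exp_log ht1pos,
          Real.log_lt_sub_one_of_pos ht1pos ht1ne]
      · exact Real.log_lt_sub_one_of_pos ht1pos ht1ne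
    nlinarith [hsum]

/-- The global minimizer of the DDO objective over everywhere-positive pmfs is the
data distribution: `L(p) ≥ L(p_data)` with equality iff `p = p_data`. -/
theorem ddo_global_minimizer {X : Type*} [Fintype X]
    (pdata pref : X → ℝ)
    (hdata : (∀ x, 0 < pdata x) ∧ ∑ x, pdata x = 1)
    (href : (∀ x, 0 < pref x) ∧ ∑ x, pref x = 1)
    (p : X → ℝ) (hp : (∀ x, 0 < p x) ∧ ∑ x, p x = 1) :
    DDOLoss pdata pref pdata ≤ DDOLoss pdata pref p
    ∧ (DDOLoss pdata pref p = DDOLoss pdata pref pdata ↔ p = pdata) := by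
  obtain ⟨hd, -⟩ := hdata
  obtain ⟨hr, -⟩ := href
  obtain ⟨hpp, -⟩ := hp
  have hL : ∀ q : X → ℝ, (∀ x, 0 < q x) → DDOLoss pdata pref q
      = ∑ x, (-(pdata x * Real.log (q x / (q x + pref x)))
          - pref x * Real.log (pref x / (q x + pref x))) := by
    intro q hq
    unfold DDOLoss
    rw [Finset.sum_sub_distrib, ← Finset.sum_neg_distrib]
    congr 1
    · exact Finset.sum_congr rfl fun x _ => by rw [sigmoid_log_div (hq x) (hr x)]
    · exact Finset.sum_congr rfl fun x _ => by rw [one_sub_sigmoid_log_div (hq x) (hr x)]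
  rw [hL p hpp, hL pdata hd]
  have hterm := fun x => ddo_key (hd x) (hr x) (hpp x)
  constructor
  · exact Finset.sum_le_sum fun x _ => (hterm x).1
  · constructor
    · intro heq
      funext x
      by_contra hne
      have hstrict := (hterm x).2 hne
      have : ∑ x, (-(pdata x * Real.log (pdata x / (pdata x + pref x)))
          - pref x * Real.log (pref x / (pdata x + pref x)))
          < ∑ x, (-(pdata x * Real.log (p x / (p x + pref x)))
          - pref x * Real.log (pref x / (p x + pref x))) := by
        apply Finset.sum_lt_sum (fun y _ => (hterm y).1) ⟨x, Finset.mem_univ x, hstrict⟩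
      linarith
    · intro h; rw [h]
end
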